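/- Suppose z₁, z₂ : [φ₀, φ₀+π] → ℂ∖{0} are two solutions of dz/dφ = 1/f(φ) − (n/f(φ))·z/|z| + i·z with f positive and continuous and 0 < n, and suppose |z₁(φ₀+π) − z₂(φ₀+π)|² = |z₁(φ₀) − z₂(φ₀)|². If additionally the angular parts satisfy e^{iζ₁(φ)} = e^{iζ₂(φ)} for all φ in the interval (forced by the equality, via the derivative formula for L) and sin ζ₁ ≡ 0 on a subinterval, then dζ₁/dφ = 1 on that subinterval, contradicting ζ₁ being constant; hence two distinct solutions cannot have equal squared distance at φ₀ and φ₀+π. -/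

import Mathlib

/-! The squared distance `L = ‖z₁ - z₂‖²` has derivative `-(2n/f) ⟪z₁ - z₂, z₁/‖z₁‖ - z₂/‖z₂‖⟫`:
the rotation term `i z` does not contribute, and the inner product is nonnegative because
normalization `x ↦ x/‖x‖` is a monotone map. If `L` takes the same value at both ends it is
constant, so the directions of `z₁` and `z₂` agree on the open interval. There `w = z₁ - z₂` solves
`w' = i w` and stays parallel to `z₁`; differentiating `Im (conj w * z₁) = 0` along the equation
for `z₁` gives `Im w = 0`, and then `w' = i w` gives `Re w = 0`. Hence `L` vanishes, i.e. the
solutions coincide. -/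
open Complex Set
open scoped RealInnerProductSpace ComplexConjugate

section InvNormSmul
variable {E : Type*} [NormedAddCommGroup E] [InnerProductSpace ℝ E]

theorem real_inner_sub_inv_norm_smul_sub_mul_norm_mul_norm (x y : E) (hx : x ≠ 0) (hy : y ≠ 0) :
    ⟪x - y, ‖x‖⁻¹ • x - ‖y‖⁻¹ • y⟫ * (‖x‖ * ‖y‖) = (‖x‖ + ‖y‖) * (‖x‖ * ‖y‖ - ⟪x, y⟫) := by
  have hx' : ‖x‖ ≠ 0 := norm_ne_zero_iff.mpr hx
  have hy' : ‖y‖ ≠ 0 := norm_ne_zero_iff.mpr hy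
  simp only [inner_sub_left, inner_sub_right, real_inner_smul_right, real_inner_self_eq_norm_sq,
    real_inner_comm x y]
  field_simp
  ring

theorem real_inner_sub_inv_norm_smul_sub_nonneg (x y : E) :
    0 ≤ ⟪x - y, ‖x‖⁻¹ • x - ‖y‖⁻¹ • y⟫ := by
  rcases eq_or_ne x 0 with rfl | hx
  · simp [real_inner_smul_right]; positivity
  rcases eq_or_ne y 0 with rfl | hy
  · simp [real_inner_smul_right]; positivity
  have hxy : 0 < ‖x‖ * ‖y‖ := by positivity
  refine nonneg_of_mul_nonneg_left ?_ hxy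
  rw [real_inner_sub_inv_norm_smul_sub_mul_norm_mul_norm x y hx hy]
  have := real_inner_le_norm x y
  have : 0 ≤ ‖x‖ + ‖y‖ := by positivity
  nlinarith

theorem inv_norm_smul_eq_of_real_inner_sub_inv_norm_smul_sub_eq_zero {x y : E}
    (h : ⟪x - y, ‖x‖⁻¹ • x - ‖y‖⁻¹ • y⟫ = 0) : ‖x‖⁻¹ • x = ‖y‖⁻¹ • y := by
  rcases eq_or_ne x 0 with rfl | hx
  · simpa [eq_comm, real_inner_smul_right, real_inner_self_eq_norm_sq] using h
  rcases eq_or_ne y 0 with rfl | hy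
  · simpa [real_inner_smul_right, real_inner_self_eq_norm_sq] using h
  have hx' : ‖x‖ ≠ 0 := norm_ne_zero_iff.mpr hx
  have hy' : ‖y‖ ≠ 0 := norm_ne_zero_iff.mpr hy
  have key := real_inner_sub_inv_norm_smul_sub_mul_norm_mul_norm x y hx hy
  rw [h, zero_mul, eq_comm, mul_eq_zero, sub_eq_zero] at key
  have hinner : ⟪x, y⟫ = ‖x‖ * ‖y‖ := by
    rcases key with h | h
    · exact absurd h (by positivity)
    · exact h.symm
  have := congrArg ((‖x‖ * ‖y‖)⁻¹ • ·) (inner_eq_norm_mul_iff_real.mp hinner)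
  simpa [smul_smul, mul_comm, hx', hy'] using this
end InvNormSmul

theorem HasDerivAt.eq_zero_of_eqOn_const {𝕜 F : Type*} [NontriviallyNormedField 𝕜]
    [NormedAddCommGroup F] [NormedSpace 𝕜 F] {g : 𝕜 → F} {g' c : F} {U : Set 𝕜} {t : 𝕜}
    (hg : HasDerivAt g g' t) (hU : IsOpen U) (ht : t ∈ U) (hc : ∀ s ∈ U, g s = c) : g' = 0 :=
  hg.unique <| (hasDerivAt_const t c).congr_of_eventuallyEq <|
    Filter.eventually_of_mem (hU.mem_nhds ht) hc

theorem HasDerivAt.im {g : ℝ → ℂ} {g' : ℂ} {t : ℝ} (h : HasDerivAt g g' t) :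
    HasDerivAt (fun s => (g s).im) g'.im t :=
  imCLM.hasFDerivAt.comp_hasDerivAt t h

noncomputable def pursuitField (a b : ℝ) (z : ℂ) : ℂ :=
  (a : ℂ) - (b : ℂ) * (z / ((‖z‖ : ℝ) : ℂ)) + I * z

theorem div_ofReal_norm_eq_inv_norm_smul (z : ℂ) : z / ((‖z‖ : ℝ) : ℂ) = ‖z‖⁻¹ • z := by
  rw [real_smul, ofReal_inv, div_eq_inv_mul]

theorem pursuitField_sub_pursuitField (a b : ℝ) (z₁ z₂ : ℂ) :
    pursuitField a b z₁ - pursuitField a b z₂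
      = (-b) • (‖z₁‖⁻¹ • z₁ - ‖z₂‖⁻¹ • z₂) + I * (z₁ - z₂) := by
  simp only [pursuitField, div_ofReal_norm_eq_inv_norm_smul, real_smul, ofReal_neg]
  ring

theorem real_inner_sub_pursuitField_sub (a b : ℝ) (z₁ z₂ : ℂ) :
    ⟪z₁ - z₂, pursuitField a b z₁ - pursuitField a b z₂⟫
      = -b * ⟪z₁ - z₂, ‖z₁‖⁻¹ • z₁ - ‖z₂‖⁻¹ • z₂⟫ := by
  have hrot : ⟪z₁ - z₂, I * (z₁ - z₂)⟫ = 0 := by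
    simp only [Complex.inner, mul_re, mul_im, conj_re, conj_im, I_re, I_im]
    ring
  rw [pursuitField_sub_pursuitField, inner_add_right, real_inner_smul_right, hrot, add_zero]

theorem pursuitField_sub_of_inv_norm_smul_eq (a b : ℝ) {z₁ z₂ : ℂ}
    (h : ‖z₁‖⁻¹ • z₁ = ‖z₂‖⁻¹ • z₂) :
    pursuitField a b z₁ - pursuitField a b z₂ = I * (z₁ - z₂) := by
  rw [pursuitField_sub_pursuitField, h, sub_self, smul_zero, zero_add]

theorem im_conj_sub_mul_eq_zero_of_inv_norm_smul_eq {z₁ z₂ : ℂ}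
    (h : ‖z₁‖⁻¹ • z₁ = ‖z₂‖⁻¹ • z₂) : (conj (z₁ - z₂) * z₁).im = 0 := by
  have hz : ∀ z : ℂ, z = ‖z‖ • (‖z‖⁻¹ • z) := fun z => by
    rcases eq_or_ne z 0 with rfl | hz
    · simp
    · rw [smul_smul, mul_inv_cancel₀ (norm_ne_zero_iff.mpr hz), one_smul]
  rw [hz z₁, hz z₂, ← h]
  generalize ‖z₁‖⁻¹ • z₁ = u
  simp only [real_smul, map_sub, map_mul, conj_ofReal, mul_im, mul_re, sub_re, sub_im,
    ofReal_re, ofReal_im, conj_re, conj_im]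
  ring

theorem im_conj_I_mul_mul_add_conj_mul_pursuitField (a b : ℝ) {w z : ℂ}
    (h : (conj w * z).im = 0) :
    (conj (I * w) * z + conj w * pursuitField a b z).im = -(a * w.im) := by
  simp only [pursuitField, div_ofReal_norm_eq_inv_norm_smul, real_smul] at h ⊢
  simp only [map_mul, conj_I, neg_re, neg_im, mul_im, mul_re, add_im, sub_im, add_re, sub_re,
    conj_re, conj_im, I_re, I_im, ofReal_re, ofReal_im] at h ⊢
  linear_combination -(b * ‖z‖⁻¹) * h

def IsPursuitSolutionOn (n : ℝ) (f : ℝ → ℝ) (z : ℝ → ℂ) (s : Set ℝ) : Prop :=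
  ∀ φ ∈ s, HasDerivAt z (pursuitField (1 / f φ) (n / f φ) (z φ)) φ

namespace IsPursuitSolutionOn

variable {n : ℝ} {f : ℝ → ℝ} {z z₁ z₂ : ℝ → ℂ} {s t : Set ℝ}

theorem mono (h : IsPursuitSolutionOn n f z s) (hts : t ⊆ s) : IsPursuitSolutionOn n f z t :=
  fun φ hφ => h φ (hts hφ)

theorem hasDerivAt_norm_sub_sq (h₁ : IsPursuitSolutionOn n f z₁ s)
    (h₂ : IsPursuitSolutionOn n f z₂ s) {φ : ℝ} (hφ : φ ∈ s) :
    HasDerivAt (fun t => ‖z₁ t - z₂ t‖ ^ 2)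
      (-(2 * (n / f φ)) * ⟪z₁ φ - z₂ φ, ‖z₁ φ‖⁻¹ • z₁ φ - ‖z₂ φ‖⁻¹ • z₂ φ⟫) φ := by
  refine ((h₁ φ hφ).sub (h₂ φ hφ)).norm_sq.congr_deriv ?_
  rw [Pi.sub_apply, real_inner_sub_pursuitField_sub]
  ring

theorem antitoneOn_norm_sub_sq (h₁ : IsPursuitSolutionOn n f z₁ s)
    (h₂ : IsPursuitSolutionOn n f z₂ s) (hs : Convex ℝ s) (hn : 0 ≤ n)
    (hf : ∀ φ ∈ s, 0 ≤ f φ) : AntitoneOn (fun t => ‖z₁ t - z₂ t‖ ^ 2) s := by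
  have hL := fun φ (hφ : φ ∈ s) => h₁.hasDerivAt_norm_sub_sq h₂ hφ
  refine antitoneOn_of_hasDerivWithinAt_nonpos hs
    (fun φ hφ => (hL φ hφ).continuousAt.continuousWithinAt)
    (fun φ hφ => (hL φ (interior_subset hφ)).hasDerivWithinAt) fun φ hφ => ?_
  have := div_nonneg hn (hf φ (interior_subset hφ))
  have := real_inner_sub_inv_norm_smul_sub_nonneg (z₁ φ) (z₂ φ)
  nlinarith

theorem inv_norm_smul_eq_of_norm_sub_sq_eq_const (h₁ : IsPursuitSolutionOn n f z₁ s)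
    (h₂ : IsPursuitSolutionOn n f z₂ s) (hs : IsOpen s) (hn : 0 < n) (hf : ∀ φ ∈ s, 0 < f φ)
    {C : ℝ} (hC : ∀ φ ∈ s, ‖z₁ φ - z₂ φ‖ ^ 2 = C) {φ : ℝ} (hφ : φ ∈ s) :
    ‖z₁ φ‖⁻¹ • z₁ φ = ‖z₂ φ‖⁻¹ • z₂ φ := by
  have h := (h₁.hasDerivAt_norm_sub_sq h₂ hφ).eq_zero_of_eqOn_const hs hφ hC
  have := div_pos hn (hf φ hφ)
  exact inv_norm_smul_eq_of_real_inner_sub_inv_norm_smul_sub_eq_zero <| by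
    simpa [this.ne'] using h

theorem eqOn_of_inv_norm_smul_eq (h₁ : IsPursuitSolutionOn n f z₁ s)
    (h₂ : IsPursuitSolutionOn n f z₂ s) (hs : IsOpen s) (hf : ∀ φ ∈ s, f φ ≠ 0)
    (hdir : ∀ φ ∈ s, ‖z₁ φ‖⁻¹ • z₁ φ = ‖z₂ φ‖⁻¹ • z₂ φ) : EqOn z₁ z₂ s := by
  set w := fun t => z₁ t - z₂ t
  have hw : ∀ φ ∈ s, HasDerivAt w (I * w φ) φ := fun φ hφ => by
    have h := (h₁ φ hφ).sub (h₂ φ hφ)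
    rwa [pursuitField_sub_of_inv_norm_smul_eq _ _ (hdir φ hφ)] at h
  have hpar : ∀ φ ∈ s, (conj (w φ) * z₁ φ).im = 0 := fun φ hφ =>
    im_conj_sub_mul_eq_zero_of_inv_norm_smul_eq (hdir φ hφ)
  have him : ∀ φ ∈ s, (w φ).im = 0 := fun φ hφ => by
    have h := (((hw φ hφ).star).mul (h₁ φ hφ)).im.eq_zero_of_eqOn_const hs hφ hpar
    rw [Complex.star_def, im_conj_I_mul_mul_add_conj_mul_pursuitField _ _ (hpar φ hφ)] at h
    simpa [hf φ hφ] using h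
  have hre : ∀ φ ∈ s, (w φ).re = 0 := fun φ hφ => by
    simpa using (hw φ hφ).im.eq_zero_of_eqOn_const hs hφ him
  exact fun φ hφ => sub_eq_zero.mp (Complex.ext (hre φ hφ) (him φ hφ))

theorem eqOn_of_norm_sub_sq_eq {a c : ℝ} (h₁ : IsPursuitSolutionOn n f z₁ (Icc a c))
    (h₂ : IsPursuitSolutionOn n f z₂ (Icc a c)) (hac : a < c) (hn : 0 < n)
    (hf : ∀ φ ∈ Icc a c, 0 < f φ) (heq : ‖z₁ c - z₂ c‖ ^ 2 = ‖z₁ a - z₂ a‖ ^ 2) :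
    EqOn z₁ z₂ (Icc a c) := by
  have hanti := h₁.antitoneOn_norm_sub_sq h₂ (convex_Icc a c) hn.le fun φ hφ => (hf φ hφ).le
  have hconst : ∀ φ ∈ Icc a c, ‖z₁ φ - z₂ φ‖ ^ 2 = ‖z₁ a - z₂ a‖ ^ 2 := fun φ hφ =>
    le_antisymm (hanti (left_mem_Icc.2 hac.le) hφ hφ.1)
      (heq ▸ hanti hφ (right_mem_Icc.2 hac.le) hφ.2)
  have hsub : Ioo a c ⊆ Icc a c := Ioo_subset_Icc_self
  have hf' : ∀ φ ∈ Ioo a c, 0 < f φ := fun φ hφ => hf φ (hsub hφ)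
  have hEq : EqOn z₁ z₂ (Ioo a c) :=
    (h₁.mono hsub).eqOn_of_inv_norm_smul_eq (h₂.mono hsub) isOpen_Ioo
      (fun φ hφ => (hf' φ hφ).ne') fun _ hφ =>
        (h₁.mono hsub).inv_norm_smul_eq_of_norm_sub_sq_eq_const (h₂.mono hsub) isOpen_Ioo hn hf'
          (fun φ hφ => hconst φ (hsub hφ)) hφ
  obtain ⟨m, hm⟩ := nonempty_Ioo.2 hac
  have hzero : ‖z₁ a - z₂ a‖ ^ 2 = 0 := by
    rw [← hconst m (hsub hm), hEq hm, sub_self, norm_zero, sq, zero_mul]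
  intro φ hφ
  simpa [sub_eq_zero] using (hconst φ hφ).trans hzero

end IsPursuitSolutionOn

theorem strict_decrease_over_period_general (n φ₀ : ℝ) (hn : 0 < n)
    (f : ℝ → ℝ) (hfpos : ∀ φ, 0 < f φ)
    (z₁ z₂ : ℝ → ℂ) (hz₁ : Differentiable ℝ z₁) (hz₂ : Differentiable ℝ z₂)
    (hode₁ : ∀ φ ∈ Set.Icc φ₀ (φ₀ + Real.pi), deriv z₁ φ =
      ((1 / f φ : ℝ) : ℂ) - ((n / f φ : ℝ) : ℂ) * (z₁ φ / ((‖z₁ φ‖ : ℝ) : ℂ))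
        + Complex.I * z₁ φ)
    (hode₂ : ∀ φ ∈ Set.Icc φ₀ (φ₀ + Real.pi), deriv z₂ φ =
      ((1 / f φ : ℝ) : ℂ) - ((n / f φ : ℝ) : ℂ) * (z₂ φ / ((‖z₂ φ‖ : ℝ) : ℂ))
        + Complex.I * z₂ φ)
    (hdistinct : ¬ Set.EqOn z₁ z₂ (Set.Icc φ₀ (φ₀ + Real.pi))) :
    ‖z₁ (φ₀ + Real.pi) - z₂ (φ₀ + Real.pi)‖ ^ 2
      < ‖z₁ φ₀ - z₂ φ₀‖ ^ 2 := by
  have h₁ : IsPursuitSolutionOn n f z₁ (Icc φ₀ (φ₀ + Real.pi)) := fun φ hφ =>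
    (hz₁ φ).hasDerivAt.congr_deriv (hode₁ φ hφ)
  have h₂ : IsPursuitSolutionOn n f z₂ (Icc φ₀ (φ₀ + Real.pi)) := fun φ hφ =>
    (hz₂ φ).hasDerivAt.congr_deriv (hode₂ φ hφ)
  have hlt : φ₀ < φ₀ + Real.pi := lt_add_of_pos_right φ₀ Real.pi_pos
  have hf : ∀ φ ∈ Icc φ₀ (φ₀ + Real.pi), 0 < f φ := fun φ _ => hfpos φ
  refine lt_of_le_of_ne ?_ fun heq => hdistinct (h₁.eqOn_of_norm_sub_sq_eq h₂ hlt hn hf heq)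
  exact h₁.antitoneOn_norm_sub_sq h₂ (convex_Icc _ _) hn.le (fun φ hφ => (hf φ hφ).le)
    (left_mem_Icc.2 hlt.le) (right_mem_Icc.2 hlt.le) hlt.le

/-- Strict decrease of the squared distance over one period (Step 3 of the stability
proof): two solutions of the complex pursuit ODE on `[φ₀, φ₀+π]` that are not
identical cannot have equal squared distance at `φ₀` and `φ₀ + π`; the distance
strictly decreases. -/
theorem strict_decrease_over_period (n φ₀ : ℝ) (hn : 0 < n)
    (f : ℝ → ℝ) (hfpos : ∀ φ, 0 < f φ) (hfcont : Continuous f)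
    (z₁ z₂ : ℝ → ℂ) (hz₁ : Differentiable ℝ z₁) (hz₂ : Differentiable ℝ z₂)
    (hz₁0 : ∀ φ, z₁ φ ≠ 0) (hz₂0 : ∀ φ, z₂ φ ≠ 0)
    (hode₁ : ∀ φ ∈ Set.Icc φ₀ (φ₀ + Real.pi), deriv z₁ φ =
      ((1 / f φ : ℝ) : ℂ) - ((n / f φ : ℝ) : ℂ) * (z₁ φ / ((‖z₁ φ‖ : ℝ) : ℂ))
        + Complex.I * z₁ φ)
    (hode₂ : ∀ φ ∈ Set.Icc φ₀ (φ₀ + Real.pi), deriv z₂ φ =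
      ((1 / f φ : ℝ) : ℂ) - ((n / f φ : ℝ) : ℂ) * (z₂ φ / ((‖z₂ φ‖ : ℝ) : ℂ))
        + Complex.I * z₂ φ)
    (hdistinct : ¬ Set.EqOn z₁ z₂ (Set.Icc φ₀ (φ₀ + Real.pi))) :
    ‖z₁ (φ₀ + Real.pi) - z₂ (φ₀ + Real.pi)‖ ^ 2
      < ‖z₁ φ₀ - z₂ φ₀‖ ^ 2 :=
  strict_decrease_over_period_general n φ₀ hn f hfpos z₁ z₂ hz₁ hz₂ hode₁ hode₂ hdistinct
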